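/- Let L ≥ 1.12, let g_1 ≥ g_2 ≥ … ≥ g_m > 0 with log(g_1/g_m) ≤ 1/L, and let p_1, …, p_m > 0 with p_1 + … + p_m = 1. Then exp( −L · Σ_{j<m} p_j · ( (log(g_j/g_m))² + 2·log(g_j/g_m) ) ) ≤ ( g_m / (p_1 g_1 + … + p_m g_m) )². -/
import Mathlib

open Finset

lemma aux_exp (L x : ℝ) (hL : 1.12 ≤ L) (hx0 : 0 ≤ x) (hx1 : L * x ≤ 1) :
    Real.exp x ≤ 1 + L / 2 * (x ^ 2 + 2 * x) := by
  have hL0 : (0:ℝ) < L := by linarith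
  have hx1' : x ≤ 1 := by nlinarith
  have h := Real.exp_bound (x := x) (by rwa [abs_of_nonneg hx0]) (n := 4) (by norm_num)
  rw [abs_of_nonneg hx0] at h
  have h2 : Real.exp x ≤ 1 + x + x^2/2 + x^3/6 + x ^ 4 * (5 / 96) := by
    have h' := (abs_le.mp h).2
    have h3 : (∑ i ∈ Finset.range 4, x ^ i / (i.factorial : ℝ)) = 1 + x + x^2/2 + x^3/6 := by
      norm_num [Finset.sum_range_succ, Nat.factorial]
    rw [h3] at h'
    norm_num [Nat.factorial] at h'
    linarith
  have hu : 0 ≤ 1 - L * x := by linarith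
  have hLm : 0 ≤ L - 1 := by linarith
  have e1 : 0 ≤ 96*L^2*(L-1)*(x - L*x^2) := by
    have : 0 ≤ x - L*x^2 := by nlinarith [mul_nonneg hx0 hu]
    positivity
  have e2 : 0 ≤ 16*L*(x^2 - L*x^3) := by
    have : 0 ≤ x^2 - L*x^3 := by nlinarith [mul_nonneg (sq_nonneg x) hu]
    positivity
  have e3 : 0 ≤ 5*(x^2 - L^2*x^4) := by
    have h0 : (0:ℝ) ≤ 1 + L*x := by positivity
    have : 0 ≤ x^2 - L^2*x^4 := by nlinarith [mul_nonneg (mul_nonneg (mul_nonneg hx0 hx0) hu) h0]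
    positivity
  have e4 : 0 ≤ (48*L^2*(L-1)*(1+2*L) - 16*L - 5)*x^2 := by
    have hs : 0 ≤ 48*L^2*(L-1)*(1+2*L) - 16*L - 5 := by nlinarith [sq_nonneg (L - 1.12), sq_nonneg L]
    exact mul_nonneg hs (sq_nonneg x)
  have key : 0 ≤ 96*L^2 * ((1 + L/2*(x^2+2*x)) - (1 + x + x^2/2 + x^3/6 + x^4*(5/96))) := by
    nlinarith [e1, e2, e3, e4]
  have hL2 : (0:ℝ) < 96*L^2 := by positivity
  have hd : 0 ≤ (1 + L/2*(x^2+2*x)) - (1 + x + x^2/2 + x^3/6 + x^4*(5/96)) := by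
    nlinarith [key, hL2]
  linarith

theorem exp_sum_le_sq (m : ℕ) (hm : 1 ≤ m) (g p : Fin m → ℝ)
    (hgmono : ∀ i j : Fin m, i ≤ j → g j ≤ g i)
    (hgpos : ∀ i, 0 < g i)
    (L : ℝ) (hL : 1.12 ≤ L)
    (hlog : Real.log (g ⟨0, by omega⟩ / g ⟨m - 1, by omega⟩) ≤ 1 / L)
    (hppos : ∀ i, 0 < p i)
    (hpsum : ∑ i, p i = 1) :
    Real.exp (-L * ∑ j ∈ univ.filter (fun j => j < (⟨m - 1, by omega⟩ : Fin m)),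
        p j * ((Real.log (g j / g ⟨m - 1, by omega⟩)) ^ 2
          + 2 * Real.log (g j / g ⟨m - 1, by omega⟩)))
      ≤ (g ⟨m - 1, by omega⟩ / ∑ i, p i * g i) ^ 2 := by
  have hL0 : (0:ℝ) < L := by linarith
  set k : Fin m := ⟨m - 1, by omega⟩ with hk
  have hkmax : ∀ j : Fin m, j ≤ k := by
    intro j
    have := j.isLt
    rw [Fin.le_def]
    simp only [hk]
    omega
  have hgk : 0 < g k := hgpos k
  have hgle : ∀ j, g k ≤ g j := fun j => hgmono j k (hkmax j)
  have hxnn : ∀ j, 0 ≤ Real.log (g j / g k) :=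
    fun j => Real.log_nonneg ((one_le_div hgk).mpr (hgle j))
  have hxle : ∀ j : Fin m, L * Real.log (g j / g k) ≤ 1 := by
    intro j
    have h0 : Real.log (g j / g k) ≤ Real.log (g ⟨0, by omega⟩ / g k) := by
      apply Real.log_le_log (div_pos (hgpos j) hgk)
      exact (div_le_div_iff_of_pos_right hgk).mpr (hgmono ⟨0, by omega⟩ j (by simp [Fin.le_def]))
    have h1 := le_trans h0 hlog
    rw [le_div_iff₀ hL0] at h1
    linarith
  have key : ∀ j, g j / g k ≤ 1 + L/2 * ((Real.log (g j / g k))^2 + 2 * Real.log (g j / g k)) := by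
    intro j
    have := aux_exp L _ hL (hxnn j) (hxle j)
    rwa [Real.exp_log (div_pos (hgpos j) hgk)] at this
  set T : ℝ := ∑ j, p j * ((Real.log (g j / g k)) ^ 2 + 2 * Real.log (g j / g k)) with hT
  have hT0 : 0 ≤ T := Finset.sum_nonneg fun j _ =>
    mul_nonneg (hppos j).le (by nlinarith [hxnn j, sq_nonneg (Real.log (g j / g k))])
  have hS0 : 0 < ∑ i, p i * g i :=
    Finset.sum_pos (fun i _ => mul_pos (hppos i) (hgpos i)) ⟨k, mem_univ k⟩
  have hsum : (∑ i, p i * g i) / g k ≤ 1 + L/2 * T := by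
    rw [Finset.sum_div]
    have step : ∀ i ∈ univ, p i * g i / g k ≤ p i * (1 + L/2 * ((Real.log (g i / g k))^2 + 2 * Real.log (g i / g k))) := by
      intro i _
      rw [mul_div_assoc]
      exact mul_le_mul_of_nonneg_left (key i) (hppos i).le
    calc (∑ i, p i * g i / g k) ≤ ∑ i, p i * (1 + L/2 * ((Real.log (g i / g k))^2 + 2 * Real.log (g i / g k))) :=
          Finset.sum_le_sum step
      _ = 1 + L/2 * T := by
          simp only [mul_add, mul_one]
          rw [Finset.sum_add_distrib, hpsum, hT, Finset.mul_sum]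
          congr 1
          apply Finset.sum_congr rfl
          intros; ring
  have hmain : ((∑ i, p i * g i) / g k)^2 ≤ Real.exp (L * T) := by
    have h1 : (∑ i, p i * g i) / g k ≤ Real.exp (L/2 * T) := by
      have := Real.add_one_le_exp (L/2 * T)
      linarith
    calc ((∑ i, p i * g i) / g k)^2 ≤ (Real.exp (L/2 * T))^2 :=
          pow_le_pow_left₀ (by positivity) h1 2
      _ = Real.exp (L * T) := by rw [sq, ← Real.exp_add]; ring_nf
  have hfilter : ∑ j ∈ univ.filter (fun j => j < k),
      p j * ((Real.log (g j / g k)) ^ 2 + 2 * Real.log (g j / g k)) = T := by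
    have hset : univ.filter (fun j : Fin m => j < k) = univ.erase k := by
      ext j
      simp only [mem_filter, mem_erase, mem_univ, true_and, and_true]
      constructor
      · exact fun h => ne_of_lt h
      · exact fun h => lt_of_le_of_ne (hkmax j) h
    rw [hset, hT, Finset.sum_erase]
    simp [div_self hgk.ne']
  rw [hfilter, neg_mul, Real.exp_neg]
  have heq : (g k / ∑ i, p i * g i)^2 = (((∑ i, p i * g i) / g k)^2)⁻¹ := by
    field_simp
  rw [heq]
  exact inv_anti₀ (pow_pos (div_pos hS0 hgk) 2) hmain
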